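/- Let (h, ⟨·,·⟩) be a finite-dimensional real Lie algebra with flat Levi-Civita connection ∇ (defined by the Koszul formula 2⟨∇_x y, z⟩ = ⟨[x,y],z⟩ - ⟨[y,z],x⟩ + ⟨[z,x],y⟩), and let β be an alternating 2-form on h that is parallel (∇β = 0, i.e., β(∇_x y, z) + β(y, ∇_x z) = 0 for all x,y,z). Then the product on g = ℝξ ⊕ h defined by (aξ + x)·(bξ + y) := (1/2)β(x,y)ξ + ∇_x y is a left-symmetric algebra structure on the central extension h_β(ξ): it satisfies x·y - y·x = [x,y]_β and the associator identity x·(y·z) - (x·y)·z = y·(x·z) - (y·x)·z. -/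
import Mathlib


/-- The LSA product on the central extension `ℝξ ⊕ h`:
`(aξ + x)·(bξ + y) = (1/2)β(x,y)ξ + ∇_x y`. -/
noncomputable def lsaMul {h : Type*} [LieRing h] [LieAlgebra ℝ h]
    (β : h →ₗ[ℝ] h →ₗ[ℝ] ℝ) (nab : h →ₗ[ℝ] h →ₗ[ℝ] h) :
    (ℝ × h) → (ℝ × h) → (ℝ × h) :=
  fun u v => ((1 / 2) * β u.2 v.2, nab u.2 v.2)

/-- If `(h, ⟨·,·⟩)` is a flat Lie algebra with Levi-Civita
connection `∇` (Koszul formula, torsion-free, flat) and `β` is a parallel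
alternating 2-form, then the product
`(aξ+x)·(bξ+y) = (1/2)β(x,y)ξ + ∇_x y` on `ℝξ ⊕ h` is a left-symmetric algebra
structure for the central extension bracket `[u,v]_β = (β(x,y), [x,y])`. -/
theorem centralExt_lsa {h : Type*} [LieRing h] [LieAlgebra ℝ h]
    (B : h →ₗ[ℝ] h →ₗ[ℝ] ℝ)
    (hsymm : ∀ x y : h, B x y = B y x)
    (hpos : ∀ x : h, x ≠ 0 → 0 < B x x)
    (nab : h →ₗ[ℝ] h →ₗ[ℝ] h)
    (hkoszul : ∀ x y w : h,
      2 * B (nab x y) w = B ⁅x, y⁆ w - B ⁅y, w⁆ x + B ⁅w, x⁆ y)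
    (htf : ∀ x y : h, nab x y - nab y x = ⁅x, y⁆)
    (hflat : ∀ x y w : h, nab x (nab y w) - nab y (nab x w) - nab ⁅x, y⁆ w = 0)
    (β : h →ₗ[ℝ] h →ₗ[ℝ] ℝ)
    (hβalt : ∀ x : h, β x x = 0)
    (hpar : ∀ x y w : h, β (nab x y) w + β y (nab x w) = 0) :
    -- x·y - y·x = [x,y]_β
    (∀ u v : ℝ × h,
      lsaMul β nab u v - lsaMul β nab v u = (β u.2 v.2, ⁅u.2, v.2⁆)) ∧
    -- the left-symmetry (associator) identity
    (∀ u v w : ℝ × h,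
      lsaMul β nab u (lsaMul β nab v w) - lsaMul β nab (lsaMul β nab u v) w
        = lsaMul β nab v (lsaMul β nab u w)
          - lsaMul β nab (lsaMul β nab v u) w) := by
  have hanti : ∀ x y : h, β x y = - β y x := by
    intro x y
    have h0 := hβalt (x + y)
    simp only [map_add, LinearMap.add_apply, hβalt x, hβalt y] at h0
    linarith
  constructor
  · intro u v
    have hv := htf u.2 v.2
    simp only [lsaMul, Prod.mk_sub_mk, Prod.mk.injEq]
    refine ⟨?_, hv⟩
    have := hanti u.2 v.2
    ring_nf
    linarith
  · intro u v w
    simp only [lsaMul, Prod.mk_sub_mk, Prod.mk.injEq]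
    constructor
    · have h1 := hpar u.2 v.2 w.2
      have h2 := hpar v.2 u.2 w.2
      linarith
    · have h1 := hflat u.2 v.2 w.2
      have h2 : nab ⁅u.2, v.2⁆ w.2
          = nab (nab u.2 v.2) w.2 - nab (nab v.2 u.2) w.2 := by
        rw [← htf u.2 v.2, map_sub, LinearMap.sub_apply]
      rw [h2] at h1
      rw [sub_eq_sub_iff_sub_eq_sub]
      exact sub_eq_zero.mp h1
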